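/- Suppose ρ([(b-1)/b, 1]) > 1/b. Then for every v > 1 - x_*, the avalanche is infinite with positive probability: P_ρ(|A^{(v)}| = ∞) > 0. -/

import Mathlib

open MeasureTheory ProbabilityTheory Filter Set
open scoped Classical ENNReal NNReal ENat

namespace OrgCrit

/-- Vertices of the rooted `b`-ary tree: finite sequences over `Fin b`,
with the root `[]`; the parent of a nonempty sequence is its `tail`
(the head being the deepest coordinate). -/
abbrev V (b : ℕ) := List (Fin b)

/-- One step of the avalanche dynamics. -/
noncomputable def nextConf (b : ℕ) (f : V b → ℝ) : V b → ℝ := fun σ =>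
  match σ with
  | [] => if 1 ≤ f [] then 0 else f []
  | _ :: l => if 1 ≤ f l then f σ + f l / (b : ℝ)
      else if 1 ≤ f σ then 0 else f σ

/-- The avalanche process `X^{(v)}(t)` started from configuration `x` with `v` added
at the root. -/
noncomputable def conf (b : ℕ) (x : V b → ℝ) (v : ℝ) : ℕ → V b → ℝ
  | 0 => fun σ => if σ = [] then x [] + v else x σ
  | t + 1 => nextConf b (conf b x v t)

/-- The avalanche set `A^{(v)}`. -/
def avalSet (b : ℕ) (x : V b → ℝ) (v : ℝ) : Set (V b) :=
  {σ | ∃ t, conf b x v t σ = 0 ∧ ∃ s < t, conf b x v s σ ≠ 0}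

/-- `x_* = sup {y ∈ [0,1] : ρ([y,1]) > 0}`. -/
noncomputable def xStar (ρ : Measure ℝ) : ℝ :=
  sSup {y : ℝ | y ∈ Set.Icc (0 : ℝ) 1 ∧ 0 < ρ (Set.Icc y 1)}

/-- `θ_b = b x_* / (b-1)`. -/
noncomputable def thetaB (b : ℕ) (ρ : Measure ℝ) : ℝ := (b : ℝ) * xStar ρ / ((b : ℝ) - 1)

/-- `Q_n^{(θ)}` built from the sequence `x` (`X_k = x k`, indexed from 1). -/
noncomputable def Qseq (b : ℕ) (θ : ℝ) (x : ℕ → ℝ) : ℕ → ℝ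
  | 0 => θ
  | n + 1 => x (n + 1) + Qseq b θ x n / (b : ℝ)

/-- `Z_n(θ) = P(Q_k^{(θ)} ≥ 1, k = 0,…,n)`. -/
noncomputable def Zfun (b : ℕ) (P : Measure (ℕ → ℝ)) (n : ℕ) (θ : ℝ) : ℝ :=
  (P {x | ∀ k ≤ n, 1 ≤ Qseq b θ x k}).toReal

/-- `Q_{n,k}^{(θ)} = Y_k + Y_{k+1}/b + … + Y_n/b^{n-k} + θ/b^{n-k+1}` (`Y_i = y i`). -/
noncomputable def Qnk (b : ℕ) (θ : ℝ) (y : ℕ → ℝ) (n k : ℕ) : ℝ :=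
  (∑ j ∈ Finset.range (n - k + 1), y (k + j) / (b : ℝ) ^ j) + θ / (b : ℝ) ^ (n - k + 1)

/-- The conditional law `P_n^{(θ)} = P( · | Q_{n,ℓ}^{(θ)} ≥ 1, ℓ = 2,…,n)`. -/
noncomputable def PnTheta (b : ℕ) (P : Measure (ℕ → ℝ)) (n : ℕ) (θ : ℝ) : Measure (ℕ → ℝ) :=
  ProbabilityTheory.cond P {y | ∀ ℓ, 2 ≤ ℓ → ℓ ≤ n → 1 ≤ Qnk b θ y n ℓ}

/-- `Q_∞ = ∑_{k ≥ 1} Y_k b^{-(k-1)}`. -/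
noncomputable def Qinf (b : ℕ) (y : ℕ → ℝ) : ℝ := ∑' k : ℕ, y (k + 1) / (b : ℝ) ^ k

/-- `Φ_b(y) = 1 - (1-y)^b`. -/
noncomputable def Phib (b : ℕ) (y : ℝ) : ℝ := 1 - (1 - y) ^ b

/-- `V_n`, the least addition at the root making the avalanche survive `n` steps. -/
noncomputable def Vmin (b : ℕ) (x : V b → ℝ) (n : ℕ) : ℝ :=
  sInf {v : ℝ | 0 < v ∧ ∀ t < n, conf b x v (t + 1) ≠ conf b x v t}

/-- `Ψ_n(ϑ)`, the distribution function of `V_n` (with `Ψ_0 = 1_{ϑ ≥ 0}`). -/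
noncomputable def Psi (b : ℕ) (P : Measure (V b → ℝ)) (n : ℕ) (ϑ : ℝ) : ℝ :=
  if n = 0 then (if 0 ≤ ϑ then 1 else 0) else (P {x | Vmin b x n ≤ ϑ}).toReal

/-- Bernoulli law on `Bool` with success probability `l`. -/
noncomputable def bern (l : ℝ) : Measure Bool :=
  ENNReal.ofReal l • Measure.dirac true + ENNReal.ofReal (1 - l) • Measure.dirac false

/-- The avalanche set `A^{(θ - X_∅)}` of the avalanche started with total value `θ`
at the root, with the convention that it is empty whenever `θ < 1`. -/
noncomputable def avalSetTheta (b : ℕ) (x : V b → ℝ) (θ : ℝ) : Set (V b) :=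
  if θ < 1 then ∅ else avalSet b x (θ - x [])

/-- `B^{(θ)}`: equal to `{∅}` if `A^{(θ-X_∅)} = ∅`, and to `{σ : m(σ) ∈ A^{(θ-X_∅)}}`
otherwise. -/
noncomputable def Bset (b : ℕ) (x : V b → ℝ) (θ : ℝ) : Set (V b) :=
  if avalSetTheta b x θ = ∅ then {([] : V b)}
  else {σ : V b | σ ≠ [] ∧ σ.tail ∈ avalSetTheta b x θ}

/-- `B_∞(θ, λ) = P_{ρ,λ}(B^{(θ)} ∩ G ≠ ∅)`, where the first component of the coordinate
at `σ` is `X_σ` and the second one indicates whether `σ` is green. -/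
noncomputable def Binfty (b : ℕ) (PJ : Measure (V b → ℝ × Bool)) (θ : ℝ) : ℝ :=
  (PJ {ω | ∃ σ ∈ Bset b (fun τ => (ω τ).1) θ, (ω σ).2 = true}).toReal

/-- The coordinates of `P` (a measure on `ℕ → ℝ`) are i.i.d. with law `ρ`. -/
def IsProjIID (ρ : Measure ℝ) (P : Measure (ℕ → ℝ)) : Prop :=
  IsProbabilityMeasure P ∧
  iIndepFun (m := fun _ : ℕ => (inferInstance : MeasurableSpace ℝ)) (fun i (x : ℕ → ℝ) => x i) P ∧
  ∀ i : ℕ, Measure.map (fun x : ℕ → ℝ => x i) P = ρ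

/-- The coordinates of `P` (a measure on configurations on the tree) are i.i.d. with
law `ρ`. -/
def IsTreeIID (b : ℕ) (ρ : Measure ℝ) (P : Measure (V b → ℝ)) : Prop :=
  IsProbabilityMeasure P ∧
  iIndepFun (m := fun _ : V b => (inferInstance : MeasurableSpace ℝ)) (fun σ (x : V b → ℝ) => x σ) P ∧
  ∀ σ : V b, Measure.map (fun x : V b → ℝ => x σ) P = ρ

/-- Joint law of the values and of the green sites: the coordinates are i.i.d., each with
law `ρ ⊗ Bernoulli(l)`. -/
def IsTreeGreenIID (b : ℕ) (ρ : Measure ℝ) (l : ℝ) (P : Measure (V b → ℝ × Bool)) : Prop :=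
  IsProbabilityMeasure P ∧
  iIndepFun (m := fun _ : V b => (inferInstance : MeasurableSpace (ℝ × Bool)))
    (fun σ (ω : V b → ℝ × Bool) => ω σ) P ∧
  ∀ σ : V b, Measure.map (fun ω : V b → ℝ × Bool => ω σ) P = ρ.prod (bern l)

/-- `z` is the common value of `lim_n Z_n(θ)^{1/n}` over `θ ≥ 1`. -/
def IsZlim (b : ℕ) (P : Measure (ℕ → ℝ)) (z : ℝ) : Prop :=
  ∀ θ : ℝ, 1 ≤ θ →
    Tendsto (fun n : ℕ => Zfun b P n θ ^ (1 / (n : ℝ))) atTop (nhds z)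

/-- `ψ θ = lim_n Z_n(θ) z^{-n}` for all `θ ≥ 0`. -/
def IsPsiFun (b : ℕ) (P : Measure (ℕ → ℝ)) (z : ℝ) (ψ : ℝ → ℝ) : Prop :=
  ∀ θ : ℝ, 0 ≤ θ →
    Tendsto (fun n : ℕ => Zfun b P n θ / z ^ n) atTop (nhds (ψ θ))

/-- `Phat` is the limit of `P_n^{(θ)}` (tested on bounded measurable functions of
finitely many coordinates), independently of `θ ≥ 1`. -/
def IsLawQhat (b : ℕ) (P : Measure (ℕ → ℝ)) (Phat : Measure (ℕ → ℝ)) : Prop :=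
  IsProbabilityMeasure Phat ∧
  ∀ θ : ℝ, 1 ≤ θ → ∀ k : ℕ, ∀ f : (ℕ → ℝ) → ℝ, Measurable f →
    (∃ M : ℝ, ∀ y, |f y| ≤ M) →
    (∀ y y' : ℕ → ℝ, (∀ i, 1 ≤ i → i ≤ k → y i = y' i) → f y = f y') →
    Tendsto (fun n : ℕ => ∫ y, f y ∂(PnTheta b P n θ)) atTop (nhds (∫ y, f y ∂Phat))

/-- The class `M♭`: probability measures on `[0,1]`, absolutely continuous with a bounded
density w.r.t. Lebesgue measure, giving positive mass to `[1 - 1/b, 1]`. -/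
def MFlat (b : ℕ) (ρ : Measure ℝ) : Prop :=
  IsProbabilityMeasure ρ ∧ ρ ((Set.Icc (0 : ℝ) 1)ᶜ) = 0 ∧
  (∃ C : NNReal, ∀ s : Set ℝ, ρ s ≤ C * volume s) ∧
  0 < ρ (Set.Icc (1 - 1 / (b : ℝ)) 1)

/-- The defining property of `c_ρ`. -/
def IsCrho (b : ℕ) (ρ : Measure ℝ) (Phat : Measure (ℕ → ℝ)) (ψ : ℝ → ℝ) (c : ℝ) : Prop :=
  0 < c ∧
  1 / c ^ 2 = ((b : ℝ) - 1) / 2 *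
    ∫ y, (∫ x, ψ (x + Qinf b y / (b : ℝ)) ∂ρ) ^ 2
      ∂(ProbabilityTheory.cond Phat {y | 1 ≤ Qinf b y})

/-- `Q_σ^{(θ)}` on the tree: `Q_∅ = θ`, `Q_σ = X_σ + Q_{m(σ)}/b`. -/
noncomputable def treeQ (b : ℕ) (θ : ℝ) (x : V b → ℝ) : V b → ℝ
  | [] => θ
  | a :: l => x (a :: l) + treeQ b θ x l / (b : ℝ)


/-!
A site whose value reaches `1` eventually topples. Hence if the root carries at least `1 - v` and
every other site on a path from the root carries at least `(b - 1) / b`, the avalanche runs down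
the whole path: each site receives at least `1 / b` from its toppling parent.

These good paths form a supercritical Galton–Watson tree: with `p = ρ([(b - 1) / b, 1])` we have
`b p > 1`. Let `Z_n` count the good paths of depth `n` and let `r > 0` (as `v > 1 - x_*`) be the
probability of the root condition. Two paths constrain the same sites only on their common
ancestors, which gives `E[Z_n²] ≤ E[Z_n] (b p)^n ∑_k (b p)^{-k}` while `E[Z_n] = r (b p)^n`. So the
second moment bound `P(Z_n ≠ 0) ≥ E[Z_n]² / E[Z_n²]` is bounded below uniformly in `n`, and by
continuity from above good paths of all depths coexist with positive probability.
-/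

section Dynamics

variable {b : ℕ} {x : V b → ℝ} {v : ℝ} {t : ℕ}

lemma conf_zero_nil : conf b x v 0 [] = x [] + v := rfl

lemma conf_zero_cons (a : Fin b) (l : V b) : conf b x v 0 (a :: l) = x (a :: l) := rfl

lemma conf_succ_nil :
    conf b x v (t + 1) [] = if 1 ≤ conf b x v t [] then 0 else conf b x v t [] := rfl

lemma conf_succ_cons (a : Fin b) (l : V b) :
    conf b x v (t + 1) (a :: l) =
      if 1 ≤ conf b x v t l then conf b x v t (a :: l) + conf b x v t l / b
      else if 1 ≤ conf b x v t (a :: l) then 0 else conf b x v t (a :: l) := rfl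

private lemma ite_one_le_lt_one (c : ℝ) : (if 1 ≤ c then 0 else c) < 1 := by
  split_ifs with h
  · exact one_pos
  · exact not_le.mp h

/-- Once its parent stays below `1`, the update rule keeps a site below `1` one step later. -/
lemma exists_forall_ge_conf_lt_one (σ : V b) : ∃ T, ∀ t ≥ T, conf b x v t σ < 1 := by
  induction σ with
  | nil =>
    refine ⟨1, fun t ht => ?_⟩
    obtain ⟨t, rfl⟩ : ∃ t', t = t' + 1 := ⟨t - 1, by omega⟩
    exact ite_one_le_lt_one _
  | cons a l ih =>
    obtain ⟨T, hT⟩ := ih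
    refine ⟨T + 1, fun t ht => ?_⟩
    obtain ⟨t, rfl⟩ : ∃ t', t = t' + 1 := ⟨t - 1, by omega⟩
    rw [conf_succ_cons, if_neg (hT t (by omega)).not_ge]
    exact ite_one_le_lt_one _

lemma conf_succ_eq_zero_or_one_le {σ : V b} (h : 1 ≤ conf b x v t σ) :
    conf b x v (t + 1) σ = 0 ∨ 1 ≤ conf b x v (t + 1) σ := by
  cases σ with
  | nil => exact .inl (if_pos h)
  | cons a l =>
    rw [conf_succ_cons]
    split_ifs with hl
    · exact .inr (h.trans (le_add_of_nonneg_right (by positivity)))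
    · exact .inl rfl

lemma conf_le_conf_succ_of_lt_one {σ : V b} (h : conf b x v t σ < 1) :
    conf b x v t σ ≤ conf b x v (t + 1) σ := by
  cases σ with
  | nil => rw [conf_succ_nil, if_neg h.not_ge]
  | cons a l =>
    rw [conf_succ_cons]
    split_ifs with hl h'
    · exact le_add_of_nonneg_right (by positivity)
    · exact absurd h' h.not_ge
    · rfl

/-- While at least `1`, a site can only grow or topple to `0`, and it is eventually below `1`. -/
lemma mem_avalSet_of_one_le_conf {σ : V b} {s : ℕ} (h : 1 ≤ conf b x v s σ) :
    σ ∈ avalSet b x v := by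
  by_contra hσ
  have hge : ∀ t ≥ s, 1 ≤ conf b x v t σ := by
    intro t ht
    induction t, ht using Nat.le_induction with
    | base => exact h
    | succ t _ ih =>
      refine (conf_succ_eq_zero_or_one_le ih).resolve_left fun h0 => hσ ?_
      exact ⟨t + 1, h0, s, by omega, by linarith⟩
  obtain ⟨T, hT⟩ := exists_forall_ge_conf_lt_one (x := x) (v := v) σ
  exact (hT (max s T) (le_max_right _ _)).not_ge (hge _ (le_max_left _ _))

lemma conf_zero_le_conf_of_forall_lt_one {σ : V b} (h : ∀ u < t, conf b x v u σ < 1) :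
    conf b x v 0 σ ≤ conf b x v t σ := by
  induction t with
  | zero => rfl
  | succ t ih =>
    exact (ih fun u hu => h u (by omega)).trans (conf_le_conf_succ_of_lt_one (h t (by omega)))

end Dynamics

section Rays

variable {b : ℕ}

def ancestors (σ : V b) : Finset (V b) := (Finset.range (σ.length + 1)).image σ.drop

lemma mem_ancestors {σ τ : V b} : τ ∈ ancestors σ ↔ τ <:+ σ := by
  refine ⟨fun h => ?_, fun h => ?_⟩
  · obtain ⟨i, -, rfl⟩ := Finset.mem_image.1 h
    exact List.drop_suffix i σ
  · exact Finset.mem_image.2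
      ⟨_, Finset.mem_range.2 (by omega), (List.suffix_iff_eq_drop.1 h).symm⟩

lemma nil_mem_ancestors (σ : V b) : [] ∈ ancestors σ :=
  mem_ancestors.2 List.nil_suffix

lemma drop_injOn (σ : V b) : Set.InjOn σ.drop (Set.Iic σ.length) := fun i hi j hj h => by
  have := congrArg List.length h
  simp only [List.length_drop, Set.mem_Iic] at this hi hj
  omega

lemma card_ancestors (σ : V b) : (ancestors σ).card = σ.length + 1 := by
  rw [ancestors, Finset.card_image_of_injOn, Finset.card_range]
  exact (drop_injOn σ).mono fun i hi => Nat.lt_succ_iff.1 (Finset.mem_range.1 hi)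

def siteSet (A S : Set ℝ) (τ : V b) : Set ℝ := if τ = [] then A else S

def rayEvent (A S : Set ℝ) (σ : V b) : Set (V b → ℝ) :=
  (ancestors σ : Set (V b)).pi (siteSet A S)

variable {A S : Set ℝ}

lemma mem_rayEvent {σ : V b} {x : V b → ℝ} :
    x ∈ rayEvent A S σ ↔ ∀ τ, τ <:+ σ → x τ ∈ siteSet A S τ := by
  simp only [rayEvent, Set.mem_pi, Finset.mem_coe, mem_ancestors]

lemma rayEvent_subset_of_suffix {σ τ : V b} (h : τ <:+ σ) : rayEvent A S σ ⊆ rayEvent A S τ :=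
  fun _ hx => mem_rayEvent.2 fun υ hυ => mem_rayEvent.1 hx υ (hυ.trans h)

end Rays

section Survival

variable {b : ℕ} {x : V b → ℝ} {v : ℝ}

/-- The parent reaches `1` while the child still holds at least its initial value,
and `(b - 1) / b + 1 / b = 1`. -/
lemma exists_one_le_conf_of_mem_rayEvent (hb : b ≠ 0) {σ : V b}
    (hσ : x ∈ rayEvent (Ici (1 - v)) (Ici (((b : ℝ) - 1) / b)) σ) :
    ∃ t, 1 ≤ conf b x v t σ := by
  induction σ with
  | nil =>
    have h := mem_rayEvent.1 hσ [] (List.suffix_refl _)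
    simp only [siteSet, if_pos, mem_Ici] at h
    exact ⟨0, by rw [conf_zero_nil]; linarith⟩
  | cons a l ih =>
    obtain ⟨u, hu⟩ := ih (rayEvent_subset_of_suffix (List.suffix_cons a l) hσ)
    by_cases hreach : ∃ t < u, 1 ≤ conf b x v t (a :: l)
    · obtain ⟨t, -, ht⟩ := hreach
      exact ⟨t, ht⟩
    have hbelow : ∀ t < u, conf b x v t (a :: l) < 1 :=
      fun t ht => not_le.1 fun h => hreach ⟨t, ht, h⟩
    have hx := mem_rayEvent.1 hσ (a :: l) (List.suffix_refl _)
    simp only [siteSet, List.cons_ne_nil, if_false, mem_Ici] at hx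
    have hinit := conf_zero_le_conf_of_forall_lt_one hbelow
    have hbpos : (0 : ℝ) < b := by positivity
    have hparent : 1 / (b : ℝ) ≤ conf b x v u l / b := by gcongr
    have hsum : ((b : ℝ) - 1) / b + 1 / b = 1 := by field_simp; ring
    rw [conf_zero_cons] at hinit
    refine ⟨u + 1, ?_⟩
    rw [conf_succ_cons, if_pos hu]
    linarith

lemma avalSet_infinite_of_forall_exists_mem_rayEvent (hb : b ≠ 0)
    (h : ∀ n, ∃ σ : V b, σ.length = n ∧
      x ∈ rayEvent (Ici (1 - v)) (Ici (((b : ℝ) - 1) / b)) σ) :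
    (avalSet b x v).Infinite := by
  choose σ hlen hσ using h
  refine Set.infinite_of_injective_forall_mem (f := σ) (fun m n hmn => ?_) fun n => ?_
  · rw [← hlen m, ← hlen n, hmn]
  · obtain ⟨t, ht⟩ := exists_one_le_conf_of_mem_rayEvent hb (hσ n)
    exact mem_avalSet_of_one_le_conf ht

end Survival

section Counting

variable {b : ℕ}

lemma card_sdiff_ancestors_le (σ σ' : V b) : (ancestors σ' \ ancestors σ).card ≤ σ'.length := by
  calc (ancestors σ' \ ancestors σ).card
      ≤ ((ancestors σ').erase []).card :=
        Finset.card_le_card fun τ hτ => by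
          obtain ⟨hτ', hτσ⟩ := Finset.mem_sdiff.1 hτ
          exact Finset.mem_erase.2 ⟨fun h => hτσ (h ▸ nil_mem_ancestors σ), hτ'⟩
    _ = σ'.length := by rw [Finset.card_erase_of_mem (nil_mem_ancestors σ'), card_ancestors]; rfl

/-- Otherwise none of the `k + 1` ancestors `σ'.drop i`, `i ≤ k`, would lie on the path to `σ`. -/
lemma drop_suffix_of_card_sdiff_ancestors_le {σ σ' : V b} {k : ℕ}
    (h : (ancestors σ' \ ancestors σ).card ≤ k) : σ'.drop k <:+ σ := by
  by_contra hk
  have hklen : k < σ'.length := by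
    by_contra! hle
    exact hk (by rw [List.drop_eq_nil_of_le hle]; exact List.nil_suffix)
  have hmaps : ∀ i ∈ Finset.range (k + 1), σ'.drop i ∈ ancestors σ' \ ancestors σ := by
    intro i hi
    have hik : i ≤ k := Nat.lt_succ_iff.1 (Finset.mem_range.1 hi)
    have hdrop : σ'.drop k = (σ'.drop i).drop (k - i) := by
      rw [List.drop_drop]; congr 1; omega
    refine Finset.mem_sdiff.2 ⟨mem_ancestors.2 (List.drop_suffix i σ'), fun hmem => hk ?_⟩
    exact hdrop ▸ (List.drop_suffix _ _).trans (mem_ancestors.1 hmem)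
  have hinj : Set.InjOn σ'.drop (Finset.range (k + 1) : Set ℕ) :=
    (drop_injOn σ').mono fun i hi => by
      simp only [Finset.coe_range, Set.mem_Iio, Set.mem_Iic] at hi ⊢; omega
  have := Finset.card_le_card_of_injOn σ'.drop hmaps hinj
  rw [Finset.card_range] at this
  omega

lemma card_filter_card_sdiff_ancestors_eq_le (σ : V b) {n k : ℕ} (hk : k ≤ n) :
    (Finset.univ.filter fun σ' : List.Vector (Fin b) n =>
      (ancestors σ'.toList \ ancestors σ).card = k).card ≤ b ^ k := by
  have hsplit : ∀ σ' : List.Vector (Fin b) n, (ancestors σ'.toList \ ancestors σ).card = k →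
      σ'.toList.take k ++ σ.drop (σ.length - (n - k)) = σ'.toList := by
    intro σ' h
    have hdrop := List.suffix_iff_eq_drop.1 (drop_suffix_of_card_sdiff_ancestors_le h.le)
    rw [List.length_drop, σ'.toList_length] at hdrop
    rw [← hdrop, List.take_append_drop]
  let head : List.Vector (Fin b) n → List.Vector (Fin b) k :=
    fun σ' => ⟨σ'.toList.take k, by simp [σ'.toList_length, hk]⟩
  have hinj : Set.InjOn head (Finset.univ.filter fun σ' : List.Vector (Fin b) n =>
      (ancestors σ'.toList \ ancestors σ).card = k : Set (List.Vector (Fin b) n)) := by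
    intro σ₁ h₁ σ₂ h₂ he
    simp only [Finset.coe_filter, Finset.mem_univ, true_and, Set.mem_ofPred_eq] at h₁ h₂
    apply List.Vector.eq
    rw [← hsplit σ₁ h₁, ← hsplit σ₂ h₂]
    exact congrArg (· ++ _) (congrArg List.Vector.toList he)
  calc _ ≤ (Finset.univ : Finset (List.Vector (Fin b) k)).card :=
        Finset.card_le_card_of_injOn head (fun _ _ => Finset.mem_coe.2 (Finset.mem_univ _)) hinj
    _ = b ^ k := by rw [Finset.card_univ, card_vector, Fintype.card_fin]

lemma sum_pow_card_sdiff_ancestors_le (σ : V b) (n : ℕ) (p : ℝ≥0∞) :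
    ∑ σ' : List.Vector (Fin b) n, p ^ (ancestors σ'.toList \ ancestors σ).card
      ≤ ∑ k ∈ Finset.range (n + 1), ((b : ℝ≥0∞) * p) ^ k := by
  have hmaps : ∀ σ' ∈ (Finset.univ : Finset (List.Vector (Fin b) n)),
      (ancestors σ'.toList \ ancestors σ).card ∈ Finset.range (n + 1) := fun σ' _ =>
    Finset.mem_range.2 <| Nat.lt_succ_of_le <|
      (card_sdiff_ancestors_le σ σ'.toList).trans_eq σ'.toList_length
  rw [← Finset.sum_fiberwise_of_maps_to hmaps]
  refine Finset.sum_le_sum fun k hk => ?_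
  rw [Finset.sum_congr rfl fun σ' hσ' => by rw [(Finset.mem_filter.1 hσ').2], Finset.sum_const,
    nsmul_eq_mul, mul_pow]
  gcongr
  exact_mod_cast
    card_filter_card_sdiff_ancestors_eq_le σ (Nat.lt_succ_iff.1 (Finset.mem_range.1 hk))

end Counting

lemma _root_.ENNReal.sum_range_succ_pow_le {c : ℝ≥0∞} (hc0 : c ≠ 0) (hc' : c ≠ ∞) (n : ℕ) :
    ∑ k ∈ Finset.range (n + 1), c ^ k ≤ c ^ n * (1 - c⁻¹)⁻¹ := by
  have hterm : ∀ k ∈ Finset.range (n + 1), c ^ k = c ^ n * c⁻¹ ^ (n - k) := by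
    intro k hk
    have hkn : n = k + (n - k) := by have := Finset.mem_range.1 hk; omega
    rw [← ENNReal.inv_pow, hkn, pow_add, Nat.add_sub_cancel_left, mul_assoc,
      ENNReal.mul_inv_cancel (pow_ne_zero _ hc0) (ENNReal.pow_ne_top hc'), mul_one]
  rw [Finset.sum_congr rfl hterm, ← Finset.mul_sum]
  gcongr
  calc ∑ k ∈ Finset.range (n + 1), c⁻¹ ^ (n - k)
      = ∑ k ∈ Finset.range (n + 1), c⁻¹ ^ k := by
        simpa using Finset.sum_range_reflect (fun k => c⁻¹ ^ k) (n + 1)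
    _ ≤ ∑' k, c⁻¹ ^ k := ENNReal.sum_le_tsum _
    _ = (1 - c⁻¹)⁻¹ := ENNReal.tsum_geometric _

lemma _root_.MeasureTheory.lintegral_sq_le_lintegral_sq_mul_measure_ne_zero {Ω : Type*}
    [MeasurableSpace Ω] {μ : Measure Ω} {Z : Ω → ℝ≥0∞} (hZ : Measurable Z) :
    (∫⁻ ω, Z ω ∂μ) ^ 2 ≤ (∫⁻ ω, Z ω ^ 2 ∂μ) * μ {ω | Z ω ≠ 0} := by
  have hsupp : MeasurableSet {ω | Z ω ≠ 0} := hZ (measurableSet_singleton 0).compl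
  have hZg : ∀ ω, Z ω * {ω | Z ω ≠ 0}.indicator 1 ω = Z ω := by
    intro ω
    by_cases h : Z ω = 0 <;> simp [h]
  have hCS := ENNReal.lintegral_mul_le_Lp_mul_Lq μ Real.HolderConjugate.two_two
    hZ.aemeasurable (measurable_one.indicator hsupp).aemeasurable
  simp only [Pi.mul_apply, hZg, ENNReal.rpow_two] at hCS
  have hind : ∫⁻ ω, ({ω | Z ω ≠ 0}.indicator 1 ω) ^ 2 ∂μ = μ {ω | Z ω ≠ 0} := by
    rw [← lintegral_indicator_one hsupp]
    congr 1 with ω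
    by_cases h : Z ω = 0 <;> simp [h]
  rw [hind] at hCS
  calc (∫⁻ ω, Z ω ∂μ) ^ 2
      ≤ ((∫⁻ ω, Z ω ^ 2 ∂μ) ^ (1 / 2 : ℝ) * μ {ω | Z ω ≠ 0} ^ (1 / 2 : ℝ)) ^ 2 := by gcongr
    _ = (∫⁻ ω, Z ω ^ 2 ∂μ) * μ {ω | Z ω ≠ 0} := by
      rw [mul_pow, ← ENNReal.rpow_natCast, ← ENNReal.rpow_natCast, ← ENNReal.rpow_mul,
        ← ENNReal.rpow_mul]
      norm_num

section Measure

variable {b : ℕ} {ρ : Measure ℝ} {P : Measure (V b → ℝ)} {A S : Set ℝ}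

lemma IsTreeIID.isProbabilityMeasure_law (hP : IsTreeIID b ρ P) : IsProbabilityMeasure ρ := by
  have := hP.1
  rw [← hP.2.2 []]
  exact Measure.isProbabilityMeasure_map (measurable_pi_apply _).aemeasurable

lemma IsTreeIID.measure_pi (hP : IsTreeIID b ρ P) (s : Finset (V b)) {f : V b → Set ℝ}
    (hf : ∀ τ, MeasurableSet (f τ)) : P ((s : Set (V b)).pi f) = ∏ τ ∈ s, ρ (f τ) := by
  have hpi : (s : Set (V b)).pi f = ⋂ τ ∈ s, (fun x : V b → ℝ => x τ) ⁻¹' f τ := by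
    ext x; simp [Set.mem_pi]
  rw [hpi, hP.2.1.measure_inter_preimage_eq_mul s fun τ _ => hf τ]
  refine Finset.prod_congr rfl fun τ _ => ?_
  rw [← hP.2.2 τ, Measure.map_apply (measurable_pi_apply τ) (hf τ)]

lemma measurableSet_siteSet (hA : MeasurableSet A) (hS : MeasurableSet S) (τ : V b) :
    MeasurableSet (siteSet A S τ) := by
  unfold siteSet; split_ifs <;> assumption

lemma measurableSet_rayEvent (hA : MeasurableSet A) (hS : MeasurableSet S) (σ : V b) :
    MeasurableSet (rayEvent A S σ) :=
  MeasurableSet.pi (Finset.countable_toSet _) fun τ _ => measurableSet_siteSet hA hS τ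

lemma prod_measure_siteSet_of_nil_notMem {s : Finset (V b)} (h : [] ∉ s) :
    ∏ τ ∈ s, ρ (siteSet A S τ) = ρ S ^ s.card := by
  rw [← Finset.prod_const]
  exact Finset.prod_congr rfl fun τ hτ => by rw [siteSet, if_neg (ne_of_mem_of_not_mem hτ h)]

lemma prod_measure_siteSet_ancestors (σ : V b) :
    ∏ τ ∈ ancestors σ, ρ (siteSet A S τ) = ρ A * ρ S ^ σ.length := by
  rw [← Finset.mul_prod_erase _ _ (nil_mem_ancestors σ),
    prod_measure_siteSet_of_nil_notMem (Finset.notMem_erase _ _),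
    Finset.card_erase_of_mem (nil_mem_ancestors σ), card_ancestors, siteSet, if_pos rfl]
  rfl

lemma IsTreeIID.measure_rayEvent (hP : IsTreeIID b ρ P) (hA : MeasurableSet A)
    (hS : MeasurableSet S) (σ : V b) : P (rayEvent A S σ) = ρ A * ρ S ^ σ.length := by
  rw [rayEvent, hP.measure_pi _ (measurableSet_siteSet hA hS), prod_measure_siteSet_ancestors]

lemma IsTreeIID.measure_rayEvent_inter (hP : IsTreeIID b ρ P) (hA : MeasurableSet A)
    (hS : MeasurableSet S) (σ σ' : V b) :
    P (rayEvent A S σ ∩ rayEvent A S σ')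
      = ρ A * ρ S ^ σ.length * ρ S ^ (ancestors σ' \ ancestors σ).card := by
  rw [rayEvent, rayEvent, ← Set.union_pi, ← Finset.coe_union,
    hP.measure_pi _ (measurableSet_siteSet hA hS),
    ← Finset.prod_sdiff Finset.subset_union_left, Finset.union_sdiff_left,
    prod_measure_siteSet_of_nil_notMem fun h => (Finset.mem_sdiff.1 h).2 (nil_mem_ancestors σ),
    prod_measure_siteSet_ancestors, mul_comm]

end Measure

section SecondMoment

variable {b : ℕ} {ρ : Measure ℝ} {P : Measure (V b → ℝ)} {A S : Set ℝ}

noncomputable def rayCount (A S : Set ℝ) (n : ℕ) (x : V b → ℝ) : ℝ≥0∞ :=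
  ∑ σ : List.Vector (Fin b) n, (rayEvent A S σ.toList).indicator 1 x

def rayUnion (b : ℕ) (A S : Set ℝ) (n : ℕ) : Set (V b → ℝ) :=
  {x | ∃ σ : V b, σ.length = n ∧ x ∈ rayEvent A S σ}

lemma setOf_rayCount_ne_zero (n : ℕ) : {x | rayCount A S n x ≠ 0} = rayUnion b A S n := by
  ext x
  simp only [rayCount, ne_eq, Finset.sum_eq_zero_iff, Finset.mem_univ, true_implies, not_forall,
    Set.indicator_apply_eq_zero, Pi.one_apply, one_ne_zero, imp_false, not_not,
    Set.mem_ofPred_eq, rayUnion]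
  exact ⟨fun ⟨σ, hσ⟩ => ⟨σ.toList, σ.toList_length, hσ⟩, fun ⟨σ, hlen, hσ⟩ => ⟨⟨σ, hlen⟩, hσ⟩⟩

lemma measurable_rayCount (hA : MeasurableSet A) (hS : MeasurableSet S) (n : ℕ) :
    Measurable (rayCount (b := b) A S n) :=
  Finset.measurable_sum _ fun σ _ =>
    measurable_one.indicator (measurableSet_rayEvent hA hS σ.toList)

lemma rayUnion_succ_subset (n : ℕ) : rayUnion b A S (n + 1) ⊆ rayUnion b A S n :=
  fun _ ⟨σ, hlen, hσ⟩ =>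
    ⟨σ.tail, by simp [hlen], rayEvent_subset_of_suffix (List.tail_suffix σ) hσ⟩

lemma IsTreeIID.lintegral_rayCount (hP : IsTreeIID b ρ P) (hA : MeasurableSet A)
    (hS : MeasurableSet S) (n : ℕ) :
    ∫⁻ x, rayCount A S n x ∂P = ((b : ℝ≥0∞) * ρ S) ^ n * ρ A := by
  unfold rayCount
  rw [lintegral_finsetSum _ fun σ _ =>
    measurable_one.indicator (measurableSet_rayEvent hA hS σ.toList)]
  simp_rw [lintegral_indicator_one (measurableSet_rayEvent hA hS _),
    hP.measure_rayEvent hA hS, List.Vector.toList_length]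
  rw [Finset.sum_const, Finset.card_univ, card_vector, Fintype.card_fin, nsmul_eq_mul]
  push_cast
  ring

lemma IsTreeIID.lintegral_rayCount_sq_le (hP : IsTreeIID b ρ P) (hA : MeasurableSet A)
    (hS : MeasurableSet S) (n : ℕ) :
    ∫⁻ x, rayCount A S n x ^ 2 ∂P
      ≤ ((b : ℝ≥0∞) * ρ S) ^ n * ρ A * ∑ k ∈ Finset.range (n + 1), ((b : ℝ≥0∞) * ρ S) ^ k := by
  have hsq : ∀ x, rayCount A S n x ^ 2 = ∑ σ : List.Vector (Fin b) n, ∑ σ' : List.Vector (Fin b) n,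
      (rayEvent A S σ.toList ∩ rayEvent A S σ'.toList).indicator 1 x := by
    intro x
    simp only [rayCount, sq, Finset.sum_mul_sum, Set.inter_indicator_one, Pi.mul_apply]
  have hmeas : ∀ σ σ' : List.Vector (Fin b) n,
      MeasurableSet (rayEvent A S σ.toList ∩ rayEvent A S σ'.toList) := fun σ σ' =>
    (measurableSet_rayEvent hA hS _).inter (measurableSet_rayEvent hA hS _)
  calc ∫⁻ x, rayCount A S n x ^ 2 ∂P
      = ∑ σ : List.Vector (Fin b) n, ∑ σ' : List.Vector (Fin b) n,
          ρ A * ρ S ^ n * ρ S ^ (ancestors σ'.toList \ ancestors σ.toList).card := by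
        simp_rw [hsq]
        rw [lintegral_finsetSum _ fun σ _ => Finset.measurable_sum _ fun σ' _ =>
          measurable_one.indicator (hmeas σ σ')]
        refine Finset.sum_congr rfl fun σ _ => ?_
        rw [lintegral_finsetSum _ fun σ' _ => measurable_one.indicator (hmeas σ σ')]
        refine Finset.sum_congr rfl fun σ' _ => ?_
        rw [lintegral_indicator_one (hmeas σ σ'), hP.measure_rayEvent_inter hA hS,
          List.Vector.toList_length]
    _ ≤ ∑ _σ : List.Vector (Fin b) n,
          ρ A * ρ S ^ n * ∑ k ∈ Finset.range (n + 1), ((b : ℝ≥0∞) * ρ S) ^ k := by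
        gcongr with σ
        rw [← Finset.mul_sum]
        gcongr
        exact sum_pow_card_sdiff_ancestors_le σ.toList n (ρ S)
    _ = _ := by
        rw [Finset.sum_const, Finset.card_univ, card_vector, Fintype.card_fin, nsmul_eq_mul]
        push_cast
        ring

lemma IsTreeIID.le_mul_measure_rayUnion (hP : IsTreeIID b ρ P) (hA : MeasurableSet A)
    (hS : MeasurableSet S) (hbS : 1 < (b : ℝ≥0∞) * ρ S) (n : ℕ) :
    ρ A ≤ (1 - ((b : ℝ≥0∞) * ρ S)⁻¹)⁻¹ * P (rayUnion b A S n) := by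
  have := hP.isProbabilityMeasure_law
  set c := (b : ℝ≥0∞) * ρ S
  have hc0 : c ≠ 0 := (zero_lt_one.trans hbS).ne'
  have hctop : c ≠ ∞ := ENNReal.mul_ne_top (ENNReal.natCast_ne_top b) (measure_ne_top ρ S)
  rcases eq_or_ne (ρ A) 0 with hA0 | hA0
  · simp [hA0]
  have hm0 : c ^ n * ρ A ≠ 0 := mul_ne_zero (pow_ne_zero _ hc0) hA0
  have hmtop : c ^ n * ρ A ≠ ∞ :=
    ENNReal.mul_ne_top (ENNReal.pow_ne_top hctop) (measure_ne_top ρ A)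
  have hCS := lintegral_sq_le_lintegral_sq_mul_measure_ne_zero (μ := P)
    (measurable_rayCount hA hS n)
  rw [hP.lintegral_rayCount hA hS, setOf_rayCount_ne_zero] at hCS
  have key : c ^ n * ρ A * (c ^ n * ρ A)
      ≤ c ^ n * ρ A * (c ^ n * ((1 - c⁻¹)⁻¹ * P (rayUnion b A S n))) :=
    calc c ^ n * ρ A * (c ^ n * ρ A) = (c ^ n * ρ A) ^ 2 := (sq _).symm
      _ ≤ (∫⁻ x, rayCount A S n x ^ 2 ∂P) * P (rayUnion b A S n) := hCS
      _ ≤ c ^ n * ρ A * (∑ k ∈ Finset.range (n + 1), c ^ k) * P (rayUnion b A S n) := by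
        gcongr
        exact hP.lintegral_rayCount_sq_le hA hS n
      _ ≤ c ^ n * ρ A * (c ^ n * (1 - c⁻¹)⁻¹) * P (rayUnion b A S n) := by
        gcongr
        exact ENNReal.sum_range_succ_pow_le hc0 hctop n
      _ = _ := by ring
  exact (ENNReal.mul_le_mul_iff_right (pow_ne_zero _ hc0) (ENNReal.pow_ne_top hctop)).1
    ((ENNReal.mul_le_mul_iff_right hm0 hmtop).1 key)

theorem IsTreeIID.measure_iInter_rayUnion_pos (hP : IsTreeIID b ρ P) (hA : MeasurableSet A)
    (hS : MeasurableSet S) (hρA : ρ A ≠ 0) (hbS : 1 < (b : ℝ≥0∞) * ρ S) :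
    0 < P (⋂ n, rayUnion b A S n) := by
  have := hP.1
  set C := (1 - ((b : ℝ≥0∞) * ρ S)⁻¹)⁻¹
  have hC0 : C ≠ 0 := ENNReal.inv_ne_zero.2 (ENNReal.sub_ne_top ENNReal.one_ne_top)
  have hCtop : C ≠ ∞ := ENNReal.inv_ne_top.2 (tsub_pos_iff_lt.2 (ENNReal.inv_lt_one.2 hbS)).ne'
  have hmeas (n : ℕ) : MeasurableSet (rayUnion b A S n) := by
    rw [← setOf_rayCount_ne_zero]
    exact measurable_rayCount hA hS n (measurableSet_singleton 0).compl
  rw [Antitone.measure_iInter (antitone_nat_of_succ_le rayUnion_succ_subset)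
    (fun n => (hmeas n).nullMeasurableSet) ⟨0, measure_ne_top P _⟩]
  refine pos_iff_ne_zero.2 fun h0 => hρA (le_antisymm ?_ zero_le)
  calc ρ A ≤ ⨅ n, C * P (rayUnion b A S n) :=
        le_iInf fun n => hP.le_mul_measure_rayUnion hA hS hbS n
    _ = 0 := by rw [← ENNReal.mul_iInf_of_ne hC0 hCtop, h0, mul_zero]

end SecondMoment

lemma measure_Ici_pos_of_lt_xStar {ρ : Measure ℝ} {a y : ℝ} (hy : y ∈ Icc (0 : ℝ) 1)
    (hρy : 0 < ρ (Icc y 1)) (ha : a < xStar ρ) : 0 < ρ (Ici a) := by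
  have hne : {y : ℝ | y ∈ Icc (0 : ℝ) 1 ∧ 0 < ρ (Icc y 1)}.Nonempty := ⟨y, hy, hρy⟩
  obtain ⟨z, hz, haz⟩ := exists_lt_of_lt_csSup hne ha
  exact hz.2.trans_le (measure_mono fun w hw => haz.le.trans hw.1)

theorem infinite_avalanche_of_supercritical_mass_general
    (b : ℕ) (ρ : Measure ℝ)
    (P : Measure (V b → ℝ)) (hP : IsTreeIID b ρ P)
    (hmass : ((b : ℝ≥0∞))⁻¹ < ρ (Set.Icc (((b : ℝ) - 1) / (b : ℝ)) 1)) :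
    ∀ v : ℝ, 1 - xStar ρ < v → 0 < P {x | (avalSet b x v).Infinite} := by
  intro v hv
  have hb : b ≠ 0 := by rintro rfl; simp at hmass
  have hsite : ((b : ℝ) - 1) / b ∈ Icc (0 : ℝ) 1 := by
    have : (1 : ℝ) ≤ b := by exact_mod_cast Nat.one_le_iff_ne_zero.2 hb
    constructor
    · positivity
    · rw [div_le_one (by positivity)]; linarith
  have hroot : ρ (Ici (1 - v)) ≠ 0 :=
    (measure_Ici_pos_of_lt_xStar hsite (zero_le.trans_lt hmass) (by linarith)).ne'
  have hsupercritical : 1 < (b : ℝ≥0∞) * ρ (Ici (((b : ℝ) - 1) / b)) :=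
    calc 1 = (b : ℝ≥0∞) * (b : ℝ≥0∞)⁻¹ :=
          (ENNReal.mul_inv_cancel (by exact_mod_cast hb) (ENNReal.natCast_ne_top b)).symm
      _ < (b : ℝ≥0∞) * ρ (Icc (((b : ℝ) - 1) / b) 1) :=
          (ENNReal.mul_lt_mul_iff_right (by exact_mod_cast hb) (ENNReal.natCast_ne_top b)).2 hmass
      _ ≤ (b : ℝ≥0∞) * ρ (Ici (((b : ℝ) - 1) / b)) := by gcongr; exact Icc_subset_Ici_self
  calc 0 < P (⋂ n, rayUnion b (Ici (1 - v)) (Ici (((b : ℝ) - 1) / b)) n) :=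
        hP.measure_iInter_rayUnion_pos measurableSet_Ici measurableSet_Ici hroot hsupercritical
    _ ≤ P {x | (avalSet b x v).Infinite} :=
        measure_mono fun x hx => avalSet_infinite_of_forall_exists_mem_rayEvent hb (mem_iInter.1 hx)

/-- if `ρ([(b-1)/b, 1]) > 1/b`, then for every `v > 1 - x_*` the avalanche
is infinite with positive probability. -/
theorem infinite_avalanche_of_supercritical_mass
    (b : ℕ) (hb : 2 ≤ b) (ρ : Measure ℝ) (hρ : IsProbabilityMeasure ρ)
    (hsupp : ρ ((Set.Icc (0 : ℝ) 1)ᶜ) = 0)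
    (P : Measure (V b → ℝ)) (hP : IsTreeIID b ρ P)
    (hmass : ((b : ℝ≥0∞))⁻¹ < ρ (Set.Icc (((b : ℝ) - 1) / (b : ℝ)) 1)) :
    ∀ v : ℝ, 1 - xStar ρ < v → 0 < P {x | (avalSet b x v).Infinite} :=
  infinite_avalanche_of_supercritical_mass_general b ρ P hP hmass

end OrgCrit
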